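/- Let k > 2 and let (A_n) be the anti-k-bonacci sequence, i.e., the anti-recurrence sequence for a = (1, 1, ..., 1) of dimension k. With κ = k² + 1, one has (n-1)κ + 1 ≤ A_n ≤ nκ for every n ≥ 1; that is, A_n lies in the interval I_n = [(n-1)κ + 1, nκ]. -/

import Mathlib

/-- `A` and `B` (indexed from 1) are complementary strictly increasing sequences
of positive integers: every positive integer lies in exactly one of their ranges. -/
def CompPair (A B : ℕ → ℕ) : Prop :=
  StrictMonoOn A (Set.Ici 1) ∧ StrictMonoOn B (Set.Ici 1) ∧
  (∀ n, 1 ≤ n → 1 ≤ A n) ∧ (∀ n, 1 ≤ n → 1 ≤ B n) ∧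
  ∀ m, 1 ≤ m →
    ((∃ n, 1 ≤ n ∧ A n = m) ∧ ¬(∃ n, 1 ≤ n ∧ B n = m)) ∨
    (¬(∃ n, 1 ≤ n ∧ A n = m) ∧ (∃ n, 1 ≤ n ∧ B n = m))

/-- `(A, B)` is the anti-recurrence pair for the positive linear form `a` of dimension `k`:
`A n = Σ_{j=1}^k a_j * B_{(n-1)k+j}` for all `n ≥ 1`. -/
def AntiRec (k : ℕ) (a : Fin k → ℕ) (A B : ℕ → ℕ) : Prop :=
  CompPair A B ∧
  ∀ n, 1 ≤ n → A n = ∑ j : Fin k, a j * B ((n - 1) * k + (j : ℕ) + 1)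

/-! Complementarity gives `B i = i + c`, where `c` is the number of terms of `A` below `B i`,
so the recurrence reads `A (m + 1) = ∑_{j < k} (m k + j + 1 + c_j)`. By strong induction the
earlier `A l` lie in their intervals, which pins each `c_j` down to
`m + 1 ≤ k (c_j + 1)` and `k c_j ≤ m + 1 + k`. Summing puts `A (m + 1)` into its interval;
the upper end needs `k (k - 1) / 2 + 2 k ≤ k²`, i.e. `k ≥ 3`. -/

open Finset

section CountLE

variable {f : ℕ → ℕ}

lemma le_apply_of_strictMonoOn (hf : StrictMonoOn f (Set.Ici 1)) (hpos : ∀ n, 1 ≤ n → 1 ≤ f n) :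
    ∀ n, 1 ≤ n → n ≤ f n := by
  intro n hn
  induction n, hn using Nat.le_induction with
  | base => exact hpos 1 le_rfl
  | succ n hn ih =>
    have : f n < f (n + 1) := hf (Set.mem_Ici.2 hn) (Set.mem_Ici.2 (by omega)) (by omega)
    omega

/-- Counts every term `f i ≤ v` (`i ≥ 1`) provided `i ≤ f i`. -/
def countLE (f : ℕ → ℕ) (v : ℕ) : ℕ := #{i ∈ Icc 1 v | f i ≤ v}

lemma countLE_eq_of_bracket (hf : StrictMonoOn f (Set.Ici 1)) (hle : ∀ n, 1 ≤ n → n ≤ f n)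
    {c v : ℕ} (hc : c = 0 ∨ f c ≤ v) (hv : v < f (c + 1)) :
    countLE f v = c := by
  suffices {i ∈ Icc 1 v | f i ≤ v} = Icc 1 c by simp [countLE, this]
  ext i
  simp only [mem_filter, mem_Icc]
  constructor
  · rintro ⟨⟨hi, -⟩, hiv⟩
    refine ⟨hi, not_lt.1 fun hci => ?_⟩
    have := (hf.le_iff_le (Set.mem_Ici.2 (by omega)) (Set.mem_Ici.2 hi)).2
      (show c + 1 ≤ i by omega)
    omega
  · rintro ⟨hi, hic⟩
    have hfc : f i ≤ v := by
      rcases hc with rfl | hc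
      · omega
      · exact ((hf.le_iff_le (Set.mem_Ici.2 hi) (Set.mem_Ici.2 (by omega))).2 hic).trans hc
    exact ⟨⟨hi, (hle i hi).trans hfc⟩, hfc⟩

lemma exists_bracket (hle : ∀ n, 1 ≤ n → n ≤ f n) (v : ℕ) :
    ∃ c, (c = 0 ∨ f c ≤ v) ∧ v < f (c + 1) := by
  have hex : ∃ c, v < f (c + 1) := ⟨v, by have := hle (v + 1) (by omega); omega⟩
  refine ⟨Nat.find hex, ?_, Nat.find_spec hex⟩
  cases hc : Nat.find hex with
  | zero => exact Or.inl rfl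
  | succ c => exact Or.inr (not_lt.1 (Nat.find_min hex (show c < Nat.find hex by omega)))

open Classical in
lemma countLE_eq_card_range (hf : StrictMonoOn f (Set.Ici 1)) (hle : ∀ n, 1 ≤ n → n ≤ f n)
    (v : ℕ) :
    countLE f v = #{m ∈ Icc 1 v | ∃ n, 1 ≤ n ∧ f n = m} := by
  rw [countLE, ← card_image_of_injOn (f := f)]
  · congr 1
    ext m
    simp only [mem_image, mem_filter, mem_Icc]
    constructor
    · rintro ⟨i, ⟨⟨hi, -⟩, hiv⟩, rfl⟩
      exact ⟨⟨(hle i hi).trans' hi, hiv⟩, i, hi, rfl⟩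
    · rintro ⟨⟨-, hmv⟩, i, hi, rfl⟩
      exact ⟨i, ⟨⟨hi, (hle i hi).trans hmv⟩, hmv⟩, rfl⟩
  · intro x hx y hy hxy
    simp only [coe_filter, mem_Icc, Set.mem_ofPred_eq] at hx hy
    exact hf.injOn (Set.mem_Ici.2 hx.1.1) (Set.mem_Ici.2 hy.1.1) hxy

end CountLE

namespace CompPair

variable {A B : ℕ → ℕ}

lemma le_apply_left (h : CompPair A B) : ∀ n, 1 ≤ n → n ≤ A n :=
  le_apply_of_strictMonoOn h.1 h.2.2.1

lemma le_apply_right (h : CompPair A B) : ∀ n, 1 ≤ n → n ≤ B n :=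
  le_apply_of_strictMonoOn h.2.1 h.2.2.2.1

lemma countLE_add_countLE (h : CompPair A B) (v : ℕ) : countLE A v + countLE B v = v := by
  classical
  rw [countLE_eq_card_range h.1 h.le_apply_left, countLE_eq_card_range h.2.1 h.le_apply_right,
    filter_congr (p := fun m => ∃ n, 1 ≤ n ∧ B n = m) (q := fun m => ¬∃ n, 1 ≤ n ∧ A n = m),
    card_filter_add_card_filter_not, Nat.card_Icc, Nat.add_sub_cancel]
  intro m hm
  rcases h.2.2.2.2 m (mem_Icc.1 hm).1 with ⟨hA, hB⟩ | ⟨hA, hB⟩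
  exacts [iff_of_false hB (not_not.2 hA), iff_of_true hB hA]

/-- `B i = i + c`, where `c` is the number of terms of `A` below `B i`. -/
lemma exists_apply_right_eq (h : CompPair A B) {i : ℕ} (hi : 1 ≤ i) :
    ∃ c, (c = 0 ∨ A c ≤ B i) ∧ B i < A (c + 1) ∧ B i = i + c := by
  obtain ⟨c, hc, hv⟩ := exists_bracket h.le_apply_left (B i)
  refine ⟨c, hc, hv, ?_⟩
  have hB : countLE B (B i) = i := countLE_eq_of_bracket h.2.1 h.le_apply_right (Or.inr le_rfl)
    (h.2.1 (Set.mem_Ici.2 hi) (Set.mem_Ici.2 (by omega)) (by omega))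
  have := h.countLE_add_countLE (B i)
  rw [hB, countLE_eq_of_bracket h.1 h.le_apply_left hc hv] at this
  omega

end CompPair

lemma lt_sum_range_of_pos {k j : ℕ} {g : ℕ → ℕ} (hk : 2 ≤ k) (hpos : ∀ i < k, 0 < g i)
    (hj : j < k) : g j < ∑ i ∈ range k, g i := by
  obtain ⟨i, hi, hij⟩ : ∃ i < k, i ≠ j :=
    ⟨if j = 0 then 1 else 0, by split_ifs <;> omega, by split_ifs <;> omega⟩
  exact single_lt_sum hij (mem_range.2 hj) (mem_range.2 hi) (hpos i hi) fun _ _ _ => Nat.zero_le _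

lemma count_bounds_of_bracket {A : ℕ → ℕ} {k m i c : ℕ} (hk : 0 < k) (hi : m * k < i)
    (hi' : i ≤ (m + 1) * k) (hcm : c ≤ m)
    (ih : ∀ l, 1 ≤ l → l ≤ m → (l - 1) * (k ^ 2 + 1) + 1 ≤ A l ∧ A l ≤ l * (k ^ 2 + 1))
    (hlow : c = 0 ∨ A c ≤ i + c) (hup : i + c < A (c + 1)) :
    m + 1 ≤ k * (c + 1) ∧ k * c ≤ m + 1 + k := by
  constructor
  · rcases eq_or_lt_of_le hcm with rfl | hcm
    · nlinarith
    · have hAc := (ih (c + 1) (by omega) hcm).2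
      have hmk : m * k < k * (c + 1) * k := by nlinarith
      have := Nat.lt_of_mul_lt_mul_right hmk
      omega
  · rcases c with _ | d
    · omega
    · have hlow : A (d + 1) ≤ i + (d + 1) := by simpa using hlow
      have hAd := (ih (d + 1) (by omega) hcm).1
      simp only [Nat.add_sub_cancel] at hAd
      have hdk : k * d * k ≤ (m + 1) * k := by nlinarith
      have := Nat.le_of_mul_le_mul_right hdk hk
      nlinarith

lemma sum_bounds_of_count_bounds {k m : ℕ} (hk : 2 < k) {f : ℕ → ℕ}
    (hf : ∀ j < k, ∃ c, f j = m * k + j + 1 + c ∧ m + 1 ≤ k * (c + 1) ∧ k * c ≤ m + 1 + k) :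
    m * (k ^ 2 + 1) + 1 ≤ ∑ j ∈ range k, f j ∧ ∑ j ∈ range k, f j ≤ (m + 1) * (k ^ 2 + 1) := by
  choose! c hfc hlow hup using hf
  have hsum : ∑ j ∈ range k, f j = k * (m * k + 1) + ∑ j ∈ range k, j + ∑ j ∈ range k, c j := by
    rw [sum_congr rfl fun j hj => hfc j (mem_range.1 hj), sum_add_distrib, sum_add_distrib,
      sum_add_distrib]
    simp only [sum_const, card_range, smul_eq_mul]
    ring
  set C := ∑ j ∈ range k, c j
  have hC_low : k * (m + 1) ≤ k * (C + k) := by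
    calc k * (m + 1) = ∑ _j ∈ range k, (m + 1) := by simp
      _ ≤ ∑ j ∈ range k, k * (c j + 1) := sum_le_sum fun j hj => hlow j (mem_range.1 hj)
      _ = k * (C + k) := by simp [← mul_sum, sum_add_distrib, C]
  have hC_up : k * C ≤ k * (m + 1 + k) := by
    calc k * C = ∑ j ∈ range k, k * c j := mul_sum ..
      _ ≤ ∑ _j ∈ range k, (m + 1 + k) := sum_le_sum fun j hj => hup j (mem_range.1 hj)
      _ = k * (m + 1 + k) := by simp
  have hgauss : (∑ j ∈ range k, j) * 2 + k = k * k := by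
    rw [sum_range_id_mul_two]
    cases k <;> simp [Nat.mul_succ, Nat.succ_mul]
  have hk3 : 3 * k ≤ k * k := Nat.mul_le_mul_right k hk
  have hC_ge := Nat.le_of_mul_le_mul_left hC_low (by omega)
  have hC_le := Nat.le_of_mul_le_mul_left hC_up (by omega)
  rw [hsum]
  constructor <;> nlinarith

/-- The n-th anti-k-bonacci number lies in the interval I_n = [(n-1)κ+1, nκ], κ = k²+1. -/
theorem stmt9 (k : ℕ) (hk : 2 < k) (A B : ℕ → ℕ)
    (h : AntiRec k (fun _ => 1) A B) :
    ∀ n, 1 ≤ n → (n - 1) * (k ^ 2 + 1) + 1 ≤ A n ∧ A n ≤ n * (k ^ 2 + 1) := by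
  obtain ⟨hAB, hrec⟩ := h
  intro n
  induction n using Nat.strong_induction_on with
  | _ n ih =>
  intro hn
  obtain ⟨m, rfl⟩ : ∃ m, n = m + 1 := ⟨n - 1, by omega⟩
  have hA : A (m + 1) = ∑ j ∈ range k, B (m * k + j + 1) := by
    simpa [Fin.sum_univ_eq_sum_range (fun j => B (m * k + j + 1))] using hrec (m + 1) le_add_self
  rw [Nat.add_sub_cancel, hA]
  refine sum_bounds_of_count_bounds hk fun j hj => ?_
  obtain ⟨c, hlow, hup, hBc⟩ := hAB.exists_apply_right_eq (i := m * k + j + 1) le_add_self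
  have hBlt : B (m * k + j + 1) < A (m + 1) :=
    hA ▸ lt_sum_range_of_pos (g := fun i => B (m * k + i + 1)) (by omega)
      (fun _ _ => hAB.2.2.2.1 _ le_add_self) hj
  have hcm : c ≤ m := by
    by_contra! hmc
    have := (hAB.1.le_iff_le (Set.mem_Ici.2 le_add_self) (Set.mem_Ici.2 (by omega))).2 hmc
    rcases hlow with rfl | hlow <;> omega
  refine ⟨c, hBc, count_bounds_of_bracket (by omega) ?_ ?_ hcm
    (fun l hl hlm => ih l (by omega) hl) (hBc ▸ hlow) (hBc ▸ hup)⟩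
  · omega
  · nlinarith
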